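/- arXiv:1610.03808 — 2 statements merged into one kernel-verified Lean document; each statement's English description precedes it below -/
import Mathlib

section
/- The diagonal approximation to the variance of the n-th coefficient (n ≥ 2) of the characteristic polynomial of a q-nary quantum graph with DFT scattering matrices equals (q−1)/q; that is, ∑_{γ̄ : E_{γ̄}=n} |A_{γ̄}|^2 = (q−1)/q, where the sum is over primitive pseudo orbits of topological length n. -/
/-- A word is Lyndon if it is nonempty and strictly smaller (lexicographically)
than all of its nontrivial rotations. -/
def IsLyndon {α : Type*} [LinearOrder α] (w : List α) : Prop :=
  w ≠ [] ∧ ∀ k : ℕ, 0 < k → k < w.length → w < w.rotate k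


namespace LyndonProof

variable {α : Type*} [LinearOrder α]

theorem lt_iff_lex {l m : List α} : l < m ↔ List.Lex (· < ·) l m := Iff.rfl

theorem lt_append_right (l : List α) {t : List α} (ht : t ≠ []) : l < l ++ t := by
  rw [lt_iff_lex]
  induction l with
  | nil => cases t with
    | nil => exact absurd rfl ht
    | cons a t => exact List.Lex.nil
  | cons a l ih => exact List.Lex.cons ih

theorem prefix_le {a b : List α} (h : a <+: b) : a ≤ b := by
  obtain ⟨t, rfl⟩ := h
  rcases eq_or_ne t [] with rfl | ht
  · simp
  · exact le_of_lt (lt_append_right a ht)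

theorem append_lt_append_left_iff {l s t : List α} : l ++ s < l ++ t ↔ s < t := by
  rw [lt_iff_lex, lt_iff_lex]
  constructor
  · intro h
    induction l with
    | nil => exact h
    | cons a l ih =>
      cases h with
      | cons h => exact ih h
      | rel h => exact absurd h (lt_irrefl a)
  · intro h
    exact List.Lex.append_left _ h l

theorem lt_append_of_lt_of_not_prefix {a b : List α} (h : a < b) (hp : ¬ a <+: b)
    (s t : List α) : a ++ s < b ++ t := by
  rw [lt_iff_lex] at h ⊢
  induction h with
  | nil => exact absurd (List.nil_prefix) hp
  | @cons x l₁ l₂ h ih =>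
    exact List.Lex.cons (ih (fun hpre => hp (List.cons_prefix_cons.mpr ⟨rfl, hpre⟩)))
  | rel h => exact List.Lex.rel h

theorem lt_append_of_lt_of_length_eq {a b : List α} (h : a < b) (hl : a.length = b.length)
    (s t : List α) : a ++ s < b ++ t := by
  refine lt_append_of_lt_of_not_prefix h (fun hp => ?_) s t
  have : a = b := List.IsPrefix.eq_of_length hp hl
  exact absurd (this ▸ h) (lt_irrefl b)

theorem le_of_append_lt_append {a b c d : List α} (hl : a.length = b.length)
    (h : a ++ c < b ++ d) : a ≤ b := by
  by_contra hba
  push_neg at hba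
  exact absurd (lt_trans h (lt_append_of_lt_of_length_eq hba hl.symm d c)) (lt_irrefl _)
  

end LyndonProof

namespace LyndonProof
variable {α : Type*} [LinearOrder α]

theorem isLyndon_singleton (a : α) : IsLyndon [a] :=
  ⟨List.cons_ne_nil a [], fun k hk hk' => absurd (Nat.lt_of_lt_of_le hk' hk) (lt_irrefl _)⟩

theorem lyndon_rot {w : List α} (hw : IsLyndon w) {x y : List α}
    (hx : x ≠ []) (hy : y ≠ []) (h : w = x ++ y) : w < y ++ x := by
  have hk : w.rotate x.length = y ++ x := by
    rw [h, List.rotate_eq_drop_append_take (by simp), List.drop_left, List.take_left]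
  have h1 : 0 < x.length := List.length_pos_iff.mpr hx
  have h2 : x.length < w.length := by
    rw [h, List.length_append]
    have := List.length_pos_iff.mpr hy
    omega
  exact hk ▸ hw.2 x.length h1 h2

theorem lyndon_not_border {w : List α} (hw : IsLyndon w) {y u v : List α}
    (hy : y ≠ []) (hu : u ≠ []) (h1 : w = y ++ u) (h2 : w = v ++ y) : False := by
  have hlen : u.length = v.length := by
    have := congrArg List.length (h1 ▸ h2)
    simp [List.length_append] at this ⊢
    omega
  have hv : v ≠ [] := by
    intro hv0
    rw [hv0] at hlen
    simp at hlen
    exact hu hlen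
  have r1 : y ++ u < u ++ y := h1 ▸ lyndon_rot hw hy hu h1
  have r2 : v ++ y < y ++ v := h2 ▸ lyndon_rot hw hv hy h2
  -- y ++ u = v ++ y
  have he : y ++ u = v ++ y := h1 ▸ h2
  have huv : u < v := by
    have : y ++ u < y ++ v := he ▸ r2
    exact append_lt_append_left_iff.mp this
  have hvu : v ≤ u := by
    have : v ++ y < u ++ y := he ▸ r1
    exact le_of_append_lt_append hlen.symm this
  exact absurd (lt_of_lt_of_le huv hvu) (lt_irrefl _)

theorem lyndon_lt_suffix {w : List α} (hw : IsLyndon w) {x y : List α}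
    (hx : x ≠ []) (hy : y ≠ []) (h : w = x ++ y) : w < y := by
  have hrot : w < y ++ x := lyndon_rot hw hx hy h
  rcases lt_trichotomy w y with h' | rfl | h'
  · exact h'
  · have h2 := congrArg List.length h
    rw [List.length_append] at h2
    have := List.length_pos_iff.mpr hx
    omega
  · -- y < w
    by_cases hp : y <+: w
    · -- y is a prefix of w, and a suffix: border
      obtain ⟨u, hu⟩ := hp
      have hune : u ≠ [] := by
        intro h0
        rw [h0, List.append_nil] at hu
        have hl1 := congrArg List.length h
        rw [← hu, List.length_append] at hl1
        have := List.length_pos_iff.mpr hx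
        omega
      exact (lyndon_not_border hw hy hune hu.symm h).elim
    · have : y ++ x < w ++ [] := lt_append_of_lt_of_not_prefix h' hp x []
      rw [List.append_nil] at this
      exact absurd (lt_trans hrot this) (lt_irrefl _)

theorem isLyndon_of_lt_suffix {w : List α} (hw : w ≠ [])
    (H : ∀ x y : List α, x ≠ [] → y ≠ [] → w = x ++ y → w < y) : IsLyndon w := by
  refine ⟨hw, fun k hk hk' => ?_⟩
  have hx : w.take k ≠ [] := by
    intro h0
    have := congrArg List.length h0
    rw [List.length_take, List.length_nil] at this
    omega
  have hy : w.drop k ≠ [] := by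
    intro h0
    have := congrArg List.length h0
    rw [List.length_drop, List.length_nil] at this
    omega
  have hsplit : w = w.take k ++ w.drop k := (List.take_append_drop k w).symm
  have h1 : w < w.drop k := H _ _ hx hy hsplit
  rw [List.rotate_eq_drop_append_take (le_of_lt hk')]
  by_cases hp : w <+: w.drop k
  · have h2 := List.IsPrefix.length_le hp
    rw [List.length_drop] at h2
    omega
  · have := lt_append_of_lt_of_not_prefix h1 hp [] (w.take k)
    rw [List.append_nil] at this
    exact this

end LyndonProof

namespace LyndonProof
variable {α : Type*} [LinearOrder α]

theorem lyndon_append_lt {u v : List α} (hu : IsLyndon u) (hv : IsLyndon v)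
    (huv : u < v) : u ++ v < v := by
  by_cases hp : u <+: v
  · obtain ⟨t, rfl⟩ := hp
    have ht : t ≠ [] := by
      intro h0; rw [h0, List.append_nil] at huv; exact absurd huv (lt_irrefl u)
    have hvt : u ++ t < t := lyndon_lt_suffix hv hu.1 ht rfl
    calc u ++ (u ++ t) < u ++ t := append_lt_append_left_iff.mpr hvt
    _ = u ++ t := rfl
  · have := lt_append_of_lt_of_not_prefix huv hp v []
    rwa [List.append_nil] at this

theorem lyndon_append {u v : List α} (hu : IsLyndon u) (hv : IsLyndon v)
    (huv : u < v) : IsLyndon (u ++ v) := by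
  have hne : u ++ v ≠ [] := by simp [hu.1]
  refine isLyndon_of_lt_suffix hne (fun x y hx hy hxy => ?_)
  rcases le_or_gt x.length u.length with hle | hlt
  · -- x is a prefix of u; y = (u.drop x.length) ++ v
    have hxu : x <+: u := List.prefix_of_prefix_length_le
      (⟨y, hxy.symm⟩) (⟨v, rfl⟩) hle
    obtain ⟨u₂, hu₂⟩ := hxu
    have hy_eq : y = u₂ ++ v := by
      have h2 : x ++ y = x ++ (u₂ ++ v) := by
        rw [← hxy, ← List.append_assoc, hu₂]
      exact List.append_cancel_left h2
    rcases eq_or_ne u₂ [] with rfl | hu₂ne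
    · rw [List.nil_append] at hy_eq
      rw [hy_eq]
      exact lyndon_append_lt hu hv huv
    · have huu₂ : u < u₂ := lyndon_lt_suffix hu hx hu₂ne hu₂.symm
      have hnp : ¬ u <+: u₂ := by
        intro hp
        have h3 := List.IsPrefix.length_le hp
        have h4 := congrArg List.length hu₂
        rw [List.length_append] at h4
        have := List.length_pos_iff.mpr hx
        omega
      have := lt_append_of_lt_of_not_prefix huu₂ hnp v v
      rwa [hy_eq]
  · -- y is a suffix of v
    have hyv : y <:+ v := by
      refine List.suffix_of_suffix_length_le ⟨x, hxy.symm⟩ ⟨u, rfl⟩ ?_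
      have h1 := congrArg List.length hxy
      rw [List.length_append, List.length_append] at h1
      omega
    obtain ⟨v₁, hv₁⟩ := hyv
    rcases eq_or_ne v₁ [] with rfl | hv₁ne
    · simp at hv₁
      rw [hv₁]
      exact lyndon_append_lt hu hv huv
    · have hyne : v < y := lyndon_lt_suffix hv hv₁ne hy hv₁.symm
      exact lt_trans (lyndon_append_lt hu hv huv) hyne

end LyndonProof

namespace LyndonProof
variable {α : Type*} [LinearOrder α]

theorem exists_sorted_fact : ∀ (N : ℕ) (L : List (List α)), L.length ≤ N →
    (∀ u ∈ L, IsLyndon u) →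
    ∃ M : List (List α), (∀ u ∈ M, IsLyndon u) ∧ M.Pairwise (· ≥ ·) ∧
      M.flatten = L.flatten ∧ M.length ≤ L.length := by
  intro N
  induction N with
  | zero =>
    intro L hL _
    rw [Nat.le_zero, List.length_eq_zero_iff] at hL
    exact ⟨[], by simp, List.Pairwise.nil, by rw [hL], by simp⟩
  | succ N ih =>
    intro L hL hLyn
    cases L with
    | nil => exact ⟨[], by simp, List.Pairwise.nil, rfl, le_refl _⟩
    | cons u rest =>
      have hrest : rest.length ≤ N := by simp at hL; omega
      obtain ⟨M', hM'Lyn, hM'sort, hM'flat, hM'len⟩ :=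
        ih rest hrest (fun x hx => hLyn x (List.mem_cons_of_mem u hx))
      cases hM' : M' with
      | nil =>
        refine ⟨[u], by simp [hLyn u (List.mem_cons_self)], List.pairwise_singleton _ u, ?_, by simp⟩
        rw [hM'] at hM'flat
        exact congrArg (u ++ ·) hM'flat
      | cons m ms =>
        subst hM'
        by_cases hum : m ≤ u
        · refine ⟨u :: m :: ms, ?_, ?_, ?_, ?_⟩
          · intro x hx
            rcases List.mem_cons.mp hx with rfl | hx'
            · exact hLyn x (List.mem_cons_self)
            · exact hM'Lyn x hx'
          · rw [List.pairwise_cons]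
            refine ⟨fun b hb => ?_, hM'sort⟩
            rcases List.mem_cons.mp hb with rfl | hb'
            · exact hum
            · exact le_trans (List.rel_of_pairwise_cons hM'sort hb') hum
          · exact congrArg (u ++ ·) hM'flat
          · simp at hM'len ⊢; omega
        · push_neg at hum
          have hmLyn : IsLyndon m := hM'Lyn m (List.mem_cons_self)
          have huLyn : IsLyndon u := hLyn u (List.mem_cons_self)
          have humLyn : IsLyndon (u ++ m) := lyndon_append huLyn hmLyn hum
          have hlen2 : ((u ++ m) :: ms).length ≤ N := by
            simp at hM'len ⊢; omega
          obtain ⟨M, hMLyn, hMsort, hMflat, hMlen⟩ := ih ((u ++ m) :: ms) hlen2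
            (fun x hx => by
              rcases List.mem_cons.mp hx with rfl | hx'
              · exact humLyn
              · exact hM'Lyn x (List.mem_cons_of_mem m hx'))
          refine ⟨M, hMLyn, hMsort, ?_, ?_⟩
          · rw [hMflat]
            show (u ++ m) ++ ms.flatten = u ++ rest.flatten
            rw [List.append_assoc]
            exact congrArg (u ++ ·) hM'flat
          · simp at hMlen hM'len ⊢; omega

theorem flatten_prefix_decomp : ∀ (M : List (List α)) (r : List α), r <+: M.flatten →
    ∃ (M1 : List (List α)) (p : List α), r = M1.flatten ++ p ∧ (∀ x ∈ M1, x ∈ M) ∧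
      (p = [] ∨ ∃ c ∈ M, p ≠ [] ∧ p <+: c) := by
  intro M
  induction M with
  | nil =>
    intro r hr
    simp at hr
    exact ⟨[], [], by simp [hr], by simp, Or.inl rfl⟩
  | cons m M' ih =>
    intro r hr
    rw [List.flatten_cons] at hr
    by_cases hlen : r.length ≤ m.length
    · have hrm : r <+: m := List.prefix_of_prefix_length_le hr (List.prefix_append m M'.flatten) hlen
      rcases eq_or_ne r [] with rfl | hrne
      · exact ⟨[], [], by simp, by simp, Or.inl rfl⟩
      · exact ⟨[], r, by simp, by simp, Or.inr ⟨m, List.mem_cons_self, hrne, hrm⟩⟩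
    · push_neg at hlen
      have hmr : m <+: r := List.prefix_of_prefix_length_le (List.prefix_append m M'.flatten) hr (le_of_lt hlen)
      obtain ⟨r₂, rfl⟩ := hmr
      have hr₂ : r₂ <+: M'.flatten := (List.prefix_append_right_inj m).mp hr
      obtain ⟨M1, p, h1, h2, h3⟩ := ih r₂ hr₂
      refine ⟨m :: M1, p, ?_, ?_, ?_⟩
      · rw [h1]
        exact (List.append_assoc m M1.flatten p).symm
      · intro x hx
        rcases List.mem_cons.mp hx with rfl | hx'
        · exact List.mem_cons_self
        · exact List.mem_cons_of_mem m (h2 x hx')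
      · rcases h3 with h3 | ⟨c, hc, h4, h5⟩
        · exact Or.inl h3
        · exact Or.inr ⟨c, List.mem_cons_of_mem m hc, h4, h5⟩

theorem no_long_head {u v : List α} {M' : List (List α)} (LL : List α)
    (hu : IsLyndon u) (hM : ∀ x ∈ v :: M', IsLyndon x)
    (hs : List.Pairwise (· ≥ ·) (v :: M'))
    (hj : u ++ LL = v ++ M'.flatten) (hlen : v.length < u.length) : False := by
  have hvLyn : IsLyndon v := hM v (List.mem_cons_self)
  have hvu_pre : v <+: u := by
    refine List.prefix_of_prefix_length_le (List.prefix_append v M'.flatten)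
      ⟨LL, hj⟩ (le_of_lt hlen)
  obtain ⟨r, hr⟩ := hvu_pre
  have hrne : r ≠ [] := by
    intro h0
    rw [h0, List.append_nil] at hr
    rw [← hr] at hlen
    exact absurd hlen (lt_irrefl _)
  have hvu : v < u := by
    rcases lt_or_eq_of_le (prefix_le ⟨r, hr⟩) with h | h
    · exact h
    · rw [h] at hlen; exact absurd hlen (lt_irrefl _)
  have hrflat : r <+: M'.flatten := by
    have h1 : v ++ r <+: v ++ M'.flatten := by
      rw [hr]
      exact ⟨LL, hj⟩
    exact (List.prefix_append_right_inj v).mp h1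
  obtain ⟨M1, p, hp1, hp2, hp3⟩ := flatten_prefix_decomp M' r hrflat
  have hM1le : ∀ x ∈ M1, x ≤ v := fun x hx => List.rel_of_pairwise_cons hs (hp2 x hx)
  have hueq : u = (v ++ M1.flatten) ++ p := by
    rw [← hr, hp1, List.append_assoc]
  rcases hp3 with rfl | ⟨c, hc, hpne, hpc⟩
  · -- p = [] : u = v ++ M1.flatten, use last element of M1
    rw [List.append_nil] at hueq
    have hM1ne : M1 ≠ [] := by
      intro h0
      rw [h0] at hp1
      simp at hp1
      exact hrne hp1
    obtain ⟨w, M0, hM0⟩ : ∃ w M0, M1 = M0 ++ [w] := by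
      refine ⟨M1.getLast hM1ne, M1.dropLast, (List.dropLast_append_getLast hM1ne).symm⟩
    have hwM1 : w ∈ M1 := by rw [hM0]; simp
    have hwLyn : IsLyndon w := hM w (List.mem_cons_of_mem v (hp2 w hwM1))
    have husplit : u = (v ++ M0.flatten) ++ w := by
      rw [hueq, hM0, List.flatten_append, List.append_assoc]
      simp
    have hunelt : u < w := lyndon_lt_suffix hu (by simp [hvLyn.1]) hwLyn.1 husplit
    have hwv : w ≤ v := hM1le w hwM1
    exact absurd (lt_of_lt_of_le hunelt (le_trans hwv (le_of_lt hvu))) (lt_irrefl u)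
  · -- p ≠ []
    have hulp : u < p := lyndon_lt_suffix hu (by simp [hvLyn.1]) hpne hueq
    have hpc' : p ≤ c := prefix_le hpc
    have hcv : c ≤ v := List.rel_of_pairwise_cons hs hc
    exact absurd (lt_of_lt_of_le hulp (le_trans hpc' (le_trans hcv (le_of_lt hvu)))) (lt_irrefl u)

theorem fact_unique : ∀ (L M : List (List α)), (∀ u ∈ L, IsLyndon u) → (∀ u ∈ M, IsLyndon u) →
    L.Pairwise (· ≥ ·) → M.Pairwise (· ≥ ·) → L.flatten = M.flatten → L = M := by
  intro L
  induction L with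
  | nil =>
    intro M _ hMLyn _ _ hflat
    cases M with
    | nil => rfl
    | cons v M' =>
      exfalso
      rw [List.flatten_nil, List.flatten_cons] at hflat
      have := (hMLyn v (List.mem_cons_self)).1
      cases v with
      | nil => exact this rfl
      | cons a as => simp at hflat
  | cons u L' ih =>
    intro M hLLyn hMLyn hLsort hMsort hflat
    cases M with
    | nil =>
      exfalso
      rw [List.flatten_nil, List.flatten_cons] at hflat
      have := (hLLyn u (List.mem_cons_self)).1
      cases u with
      | nil => exact this rfl
      | cons a as => simp at hflat
    | cons v M' =>
      rw [List.flatten_cons, List.flatten_cons] at hflat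
      have hlen : u.length = v.length := by
        by_contra hne
        rcases Nat.lt_or_ge u.length v.length with h | h
        · exact no_long_head M'.flatten (hMLyn v (List.mem_cons_self))
            hLLyn hLsort hflat.symm h
        · rcases lt_or_eq_of_le h with h' | h'
          · exact no_long_head L'.flatten (hLLyn u (List.mem_cons_self))
              hMLyn hMsort hflat h'
          · exact hne h'.symm
      have huv : u = v := by
        have h1 : u <+: v ++ M'.flatten := ⟨L'.flatten, hflat⟩
        have h2 : u <+: v := List.prefix_of_prefix_length_le h1
          (List.prefix_append v M'.flatten) (le_of_eq hlen)
        exact List.IsPrefix.eq_of_length h2 hlen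
      subst huv
      have htail : L'.flatten = M'.flatten := List.append_cancel_left hflat
      have := ih M' (fun x hx => hLLyn x (List.mem_cons_of_mem u hx))
        (fun x hx => hMLyn x (List.mem_cons_of_mem u hx))
        (List.pairwise_cons.mp hLsort).2 (List.pairwise_cons.mp hMsort).2 htail
      rw [this]

end LyndonProof

namespace LyndonProof
variable {α : Type*} [LinearOrder α]

theorem ms_equiv (n : ℕ) :
    Nonempty ({m : Multiset (List α) // (∀ w ∈ m, IsLyndon w) ∧ (m.map List.length).sum = n}
      ≃ {w : List α // w.length = n}) := by
  refine ⟨Equiv.ofBijective (fun m =>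
    ⟨(Multiset.sort m.1 (· ≥ ·)).flatten, ?_⟩) ⟨?_, ?_⟩⟩
  · -- length
    rw [List.length_flatten]
    have h1 : (↑(Multiset.sort m.1 (· ≥ ·)) : Multiset (List α)) = m.1 :=
      Multiset.sort_eq _ _
    have h2 : ((Multiset.sort m.1 (· ≥ ·)).map List.length).sum
        = (m.1.map List.length).sum := by
      conv_rhs => rw [← h1]
      rw [Multiset.map_coe, Multiset.sum_coe]
    rw [h2]
    exact m.2.2
  · -- injective
    rintro ⟨m1, h1, h1'⟩ ⟨m2, h2, h2'⟩ hmm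
    simp only [Subtype.mk.injEq] at hmm ⊢
    have hs1 : (↑(Multiset.sort m1 (· ≥ ·)) : Multiset (List α)) = m1 := Multiset.sort_eq _ _
    have hs2 : (↑(Multiset.sort m2 (· ≥ ·)) : Multiset (List α)) = m2 := Multiset.sort_eq _ _
    have heq : Multiset.sort m1 (· ≥ ·) = Multiset.sort m2 (· ≥ ·) := by
      refine fact_unique _ _ ?_ ?_ ?_ ?_ hmm
      · intro u hu; exact h1 u (by rw [← hs1]; exact_mod_cast hu)
      · intro u hu; exact h2 u (by rw [← hs2]; exact_mod_cast hu)
      · exact Multiset.pairwise_sort _ _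
      · exact Multiset.pairwise_sort _ _
    rw [← hs1, ← hs2, heq]
  · -- surjective
    rintro ⟨w, hw⟩
    -- start from factorization into singletons
    have hjoin : (w.map (fun a => [a])).flatten = w := by
      clear hw
      induction w with
      | nil => rfl
      | cons a t iht => simp only [List.map_cons, List.flatten_cons, iht, List.singleton_append]
    have hsing : ∀ u ∈ w.map (fun a => [a]), IsLyndon u := by
      intro u hu
      obtain ⟨a, _, rfl⟩ := List.mem_map.mp hu
      exact isLyndon_singleton a
    obtain ⟨M, hMLyn, hMsort, hMflat, _⟩ :=
      exists_sorted_fact (w.map (fun a => [a])).length (w.map (fun a => [a])) (le_refl _) hsing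
    rw [hjoin] at hMflat
    refine ⟨⟨(↑M : Multiset (List α)), ?_, ?_⟩, ?_⟩
    · intro u hu; exact hMLyn u (by exact_mod_cast hu)
    · rw [Multiset.map_coe, Multiset.sum_coe]
      rw [← List.length_flatten, hMflat, hw]
    · -- f applied gives w
      have hsorteq : Multiset.sort (↑M : Multiset (List α)) (· ≥ ·) = M := by
        refine List.Perm.eq_of_pairwise' (Multiset.pairwise_sort _ _) hMsort ?_
        exact Multiset.coe_eq_coe.mp (Multiset.sort_eq _ _)
      simp only [hsorteq]
      exact Subtype.ext hMflat

end LyndonProof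


namespace LyndonProof
variable {α : Type*} [LinearOrder α]
theorem ms_card (n : ℕ) :
    Nat.card {m : Multiset (List α) // (∀ w ∈ m, IsLyndon w) ∧ (m.map List.length).sum = n}
      = Nat.card {w : List α // w.length = n} :=
  Nat.card_congr (ms_equiv n).some
end LyndonProof

namespace LyndonProof
variable {α : Type*} [LinearOrder α] [Fintype α]

theorem wrd_card (n : ℕ) : Nat.card {w : List α // w.length = n} = Fintype.card α ^ n := by
  have h : Nat.card (List.Vector α n) = Fintype.card α ^ n := by
    rw [Nat.card_eq_fintype_card, card_vector]
  exact h

theorem ms_card' (n : ℕ) :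
    Nat.card {m : Multiset (List α) // (∀ w ∈ m, IsLyndon w) ∧ (m.map List.length).sum = n}
      = Fintype.card α ^ n := (ms_card n).trans (wrd_card n)

theorem ms_finite (n : ℕ) :
    Finite {m : Multiset (List α) // (∀ w ∈ m, IsLyndon w) ∧ (m.map List.length).sum = n} := by
  haveI : Fintype (List.Vector α n) := inferInstance
  have h1 : Finite {w : List α // w.length = n} := Finite.of_fintype (List.Vector α n)
  obtain ⟨e⟩ := ms_equiv (α := α) n
  exact Finite.of_equiv _ e.symm

theorem ss_finite (n : ℕ) :
    Finite {S : Finset (List α) // (∀ w ∈ S, IsLyndon w) ∧ ∑ w ∈ S, w.length = n} := by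
  have := ms_finite (α := α) n
  refine Finite.of_injective (fun S =>
    (⟨S.1.val, fun w hw => S.2.1 w hw, by
      rw [← Finset.sum_eq_multiset_sum]; exact S.2.2⟩ :
      {m : Multiset (List α) // (∀ w ∈ m, IsLyndon w) ∧ (m.map List.length).sum = n})) ?_
  rintro ⟨S, hS⟩ ⟨T, hT⟩ h
  simp only [Subtype.mk.injEq] at h ⊢
  exact Finset.val_injective h

theorem sum_identity (m : ℕ) :
    Fintype.card α ^ m = ∑ j ∈ Finset.range (m / 2 + 1),
      Nat.card {S : Finset (List α) // (∀ w ∈ S, IsLyndon w) ∧ ∑ w ∈ S, w.length = m - 2*j}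
        * Fintype.card α ^ j := by
  classical
  set SS : ℕ → Type _ := fun k =>
    {S : Finset (List α) // (∀ w ∈ S, IsLyndon w) ∧ ∑ w ∈ S, w.length = k} with hSS
  set MS : ℕ → Type _ := fun k =>
    {mm : Multiset (List α) // (∀ w ∈ mm, IsLyndon w) ∧ (mm.map List.length).sum = k} with hMS
  -- the bijection
  have h2j : ∀ j : Fin (m/2 + 1), 2 * (j : ℕ) ≤ m := by
    intro j
    have := j.2
    have h' : (j : ℕ) ≤ m / 2 := by omega
    have := (Nat.le_div_iff_mul_le (by norm_num)).mp h'
    omega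
  let g : (Σ j : Fin (m/2 + 1), SS (m - 2*(j : ℕ)) × MS (j : ℕ)) → MS m := fun x =>
    ⟨x.2.1.1.val + (x.2.2.1 + x.2.2.1), by
      constructor
      · intro w hw
        rcases Multiset.mem_add.mp hw with hw | hw
        · exact x.2.1.2.1 w hw
        · rcases Multiset.mem_add.mp hw with hw | hw <;> exact x.2.2.2.1 w hw
      · rw [Multiset.map_add, Multiset.sum_add, Multiset.map_add, Multiset.sum_add]
        have e1 : (Multiset.map List.length x.2.1.1.val).sum = m - 2*(x.1 : ℕ) := by
          rw [← Finset.sum_eq_multiset_sum]; exact x.2.1.2.2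
        have e2 : (Multiset.map List.length x.2.2.1).sum = (x.1 : ℕ) := x.2.2.2.2
        rw [e1, e2]
        have := h2j x.1
        omega⟩
  have hg : Function.Bijective g := by
    constructor
    · rintro ⟨j, ⟨S, hS⟩, ⟨t, ht⟩⟩ ⟨j', ⟨S', hS'⟩, ⟨t', ht'⟩⟩ h
      have hcnt : ∀ w : List α, S.val.count w + (t.count w + t.count w)
          = S'.val.count w + (t'.count w + t'.count w) := by
        intro w
        have := congrArg (Multiset.count w) (Subtype.ext_iff.mp h)
        simpa [g, Multiset.count_add] using this
      have hmem : ∀ w : List α, w ∈ S ↔ w ∈ S' := by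
        intro w
        have h1 := hcnt w
        rw [Multiset.count_eq_of_nodup S.nodup, Multiset.count_eq_of_nodup S'.nodup] at h1
        by_cases hw : w ∈ S <;> by_cases hw' : w ∈ S' <;> simp [hw, hw'] at h1 ⊢ <;> omega
      have hSeq : S = S' := Finset.ext hmem
      have hteq : t = t' := by
        rw [Multiset.ext]
        intro w
        have h1 := hcnt w
        rw [hSeq] at h1
        omega
      have hjeq : j = j' := by
        have := ht.2
        rw [hteq] at this
        rw [ht'.2] at this
        exact Fin.ext this.symm
      subst hjeq
      have e1 : (⟨S, hS⟩ : SS (m - 2*(j:ℕ))) = ⟨S', hS'⟩ := Subtype.ext hSeq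
      have e2 : (⟨t, ht⟩ : MS (j:ℕ)) = ⟨t', ht'⟩ := Subtype.ext hteq
      rw [e1, e2]
    · rintro ⟨m', hLyn, hwt⟩
      set S : Finset (List α) := m'.toFinset.filter (fun w => m'.count w % 2 = 1) with hSdef
      set t : Multiset (List α) :=
        ∑ w ∈ m'.toFinset, Multiset.replicate (m'.count w / 2) w with htdef
      have hcount_t : ∀ w, t.count w = m'.count w / 2 := by
        intro w
        rw [htdef, Multiset.count_sum']
        rw [Finset.sum_congr rfl (fun x _ => Multiset.count_replicate w x (m'.count x / 2))]
        rw [Finset.sum_ite_eq' m'.toFinset w (fun x => m'.count x / 2)]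
        by_cases hw : w ∈ m'.toFinset
        · simp [hw]
        · rw [if_neg hw]
          have : m'.count w = 0 := Multiset.count_eq_zero.mpr (fun hc => hw (Multiset.mem_toFinset.mpr hc))
          omega
      have hcount_S : ∀ w, S.val.count w = if m'.count w % 2 = 1 then 1 else 0 := by
        intro w
        rw [Multiset.count_eq_of_nodup S.nodup]
        simp only [Finset.mem_val]
        by_cases hw : w ∈ S
        · rw [if_pos hw]
          have := (Finset.mem_filter.mp hw).2
          rw [if_pos this]
        · rw [if_neg hw]
          by_cases hpar : m'.count w % 2 = 1
          · have hwm : w ∈ m' := by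
              rw [← Multiset.count_pos]
              omega
            exact absurd (Finset.mem_filter.mpr ⟨Multiset.mem_toFinset.mpr hwm, hpar⟩) hw
          · rw [if_neg hpar]
      have hrecon : S.val + (t + t) = m' := by
        rw [Multiset.ext]
        intro w
        rw [Multiset.count_add, Multiset.count_add, hcount_S, hcount_t]
        by_cases hpar : m'.count w % 2 = 1 <;> simp [hpar] <;> omega
      set j : ℕ := (t.map List.length).sum with hjdef
      have hSsum : ∑ w ∈ S, w.length = (S.val.map List.length).sum :=
        Finset.sum_eq_multiset_sum _ _
      have htot : (∑ w ∈ S, w.length) + 2 * j = m := by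
        rw [← hwt, ← hrecon, Multiset.map_add, Multiset.sum_add, Multiset.map_add,
          Multiset.sum_add, hSsum]
        omega
      have hj2 : 2 * j ≤ m := by omega
      have hjlt : j < m / 2 + 1 := by omega
      have hSLyn : ∀ w ∈ S, IsLyndon w := by
        intro w hw
        exact hLyn w (Multiset.mem_toFinset.mp (Finset.mem_filter.mp hw).1)
      have htLyn : ∀ w ∈ t, IsLyndon w := by
        intro w hw
        have : t.count w ≠ 0 := by
          rw [Ne, Multiset.count_eq_zero]
          simpa using hw
        rw [hcount_t w] at this
        have hwm : w ∈ m' := by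
          rw [← Multiset.count_pos]
          omega
        exact hLyn w hwm
      refine ⟨⟨⟨j, hjlt⟩, ⟨S, hSLyn, by show ∑ w ∈ S, w.length = m - 2 * j; omega⟩,
        ⟨t, htLyn, rfl⟩⟩, ?_⟩
      exact Subtype.ext hrecon
  -- now count
  haveI hMSfin : ∀ k : ℕ, Finite (MS k) := fun k => ms_finite k
  haveI hSSfin : ∀ k : ℕ, Finite (SS k) := fun k => ss_finite k
  haveI : ∀ j : Fin (m/2+1), Fintype (SS (m - 2*(j:ℕ)) × MS (j:ℕ)) := fun j => by
    haveI := Fintype.ofFinite (SS (m - 2*(j:ℕ)))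
    haveI := Fintype.ofFinite (MS (j:ℕ))
    infer_instance
  calc Fintype.card α ^ m = Nat.card (MS m) := (ms_card' m).symm
    _ = Nat.card (Σ j : Fin (m/2 + 1), SS (m - 2*(j : ℕ)) × MS (j : ℕ)) :=
        (Nat.card_congr (Equiv.ofBijective g hg)).symm
    _ = ∑ j : Fin (m/2 + 1), Nat.card (SS (m - 2*(j : ℕ)) × MS (j : ℕ)) := by
        rw [Nat.card_eq_fintype_card, Fintype.card_sigma]
        refine Finset.sum_congr rfl (fun j _ => ?_)
        rw [Nat.card_eq_fintype_card]
    _ = ∑ j : Fin (m/2 + 1), Nat.card (SS (m - 2*(j : ℕ))) * Fintype.card α ^ (j : ℕ) := by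
        refine Finset.sum_congr rfl (fun j _ => ?_)
        rw [Nat.card_prod, ms_card' (α := α) (j : ℕ)]
    _ = ∑ j ∈ Finset.range (m / 2 + 1), Nat.card (SS (m - 2*j)) * Fintype.card α ^ j := by
        exact Fin.sum_univ_eq_sum_range (fun j => Nat.card (SS (m - 2*j)) * Fintype.card α ^ j) _

end LyndonProof

namespace LyndonProof

theorem ss_card_eq {α : Type*} [LinearOrder α] [Fintype α] (n : ℕ) (hn : 2 ≤ n) :
    Nat.card {S : Finset (List α) // (∀ w ∈ S, IsLyndon w) ∧ ∑ w ∈ S, w.length = n}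
      + Fintype.card α ^ (n - 1) = Fintype.card α ^ n := by
  set c := Fintype.card α with hc
  set D : ℕ → ℕ := fun k =>
    Nat.card {S : Finset (List α) // (∀ w ∈ S, IsLyndon w) ∧ ∑ w ∈ S, w.length = k} with hD
  have h1 : c ^ n = ∑ j ∈ Finset.range (n / 2 + 1), D (n - 2*j) * c ^ j := sum_identity n
  have h2 : c ^ (n-2) = ∑ j ∈ Finset.range ((n-2) / 2 + 1), D (n - 2 - 2*j) * c ^ j :=
    sum_identity (n-2)
  rw [Finset.sum_range_succ'] at h1
  have hhalf : (n - 2) / 2 + 1 = n / 2 := by omega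
  rw [hhalf] at h2
  have h3 : c ^ (n - 1) = ∑ j ∈ Finset.range (n / 2), D (n - 2*(j+1)) * c ^ (j+1) := by
    have hpow : c ^ (n - 1) = c * c ^ (n - 2) := by
      have : n - 1 = (n - 2) + 1 := by omega
      rw [this, pow_succ]
      ring
    rw [hpow, h2, Finset.mul_sum]
    refine Finset.sum_congr rfl (fun j _ => ?_)
    have he : n - 2*(j+1) = n - 2 - 2*j := by omega
    rw [he, pow_succ]
    ring
  rw [← h3] at h1
  simp only [Nat.mul_zero, Nat.sub_zero, pow_zero, mul_one] at h1
  show D n + c ^ (n - 1) = c ^ n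
  omega

end LyndonProof


/-- Diagonal approximation for the variance of the `n`-th coefficient of the
characteristic polynomial of a `q`-nary quantum graph with DFT scattering
matrices: each primitive pseudo orbit `γ̄` of topological length `n` has
`|A_{γ̄}|² = q^{-n}`, and the primitive pseudo orbits of topological length `n`
are in bijection with the finite sets of distinct Lyndon words of total length
`n`; so the diagonal sum `∑_{γ̄ : E_{γ̄} = n} |A_{γ̄}|²` equals the number of such
sets times `q^{-n}`, which is `(q-1)/q` for `n ≥ 2`. -/
theorem diagonal_approximation (q n : ℕ) (hq : 1 ≤ q) (hn : 2 ≤ n) :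
    (Nat.card {S : Finset (List (Fin q)) //
        (∀ w ∈ S, IsLyndon w) ∧ ∑ w ∈ S, w.length = n} : ℝ) *
        ((q : ℝ) ^ n)⁻¹ =
      ((q : ℝ) - 1) / (q : ℝ) := by
  have key := LyndonProof.ss_card_eq (α := Fin q) n hn
  rw [Fintype.card_fin] at key
  have hq0 : (q : ℝ) ≠ 0 := Nat.cast_ne_zero.mpr (by omega)
  obtain ⟨k, rfl⟩ : ∃ k, n = k + 1 := ⟨n - 1, by omega⟩
  have hk : (k + 1) - 1 = k := rfl
  rw [hk] at key
  have hcast : (Nat.card {S : Finset (List (Fin q)) //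
      (∀ w ∈ S, IsLyndon w) ∧ ∑ w ∈ S, w.length = k + 1} : ℝ)
      = (q : ℝ) ^ (k + 1) - (q : ℝ) ^ k := by
    have h := congrArg (Nat.cast : ℕ → ℝ) key
    push_cast at h
    linarith
  rw [hcast]
  have hqk : (q : ℝ) ^ k ≠ 0 := pow_ne_zero _ hq0
  rw [pow_succ]
  field_simp
end

section
/- Over the binary alphabet {0,1}, exactly half of the 2^n words of length n (for n ≥ 2) have strictly decreasing Chen–Fox–Lyndon factorization; i.e., Str_2(n) = 2^{n−1}. -/
/-- A word has a strictly decreasing Chen–Fox–Lyndon factorization if it is the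
concatenation of a strictly decreasing sequence of Lyndon words. -/
def HasStrictDecomp {α : Type*} [LinearOrder α] (w : List α) : Prop :=
  ∃ f : List (List α), f.flatten = w ∧ (∀ v ∈ f, IsLyndon v) ∧ f.Chain' (· > ·)

/-- `Str q n` counts the words of length `n` over a `q`-letter alphabet whose
Chen–Fox–Lyndon factorization is strictly decreasing. -/
noncomputable def Str (q n : ℕ) : ℕ :=
  Nat.card {w : List (Fin q) // w.length = n ∧ HasStrictDecomp w}

section Aux

open List

variable {α : Type*} [LinearOrder α]


/-! ### Lexicographic order lemmas -/

lemma lex_append_left_iff (p x y : List α) : p ++ x < p ++ y ↔ x < y := by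
  induction p with
  | nil => rfl
  | cons a p ih =>
    show List.Lex _ (a :: (p ++ x)) (a :: (p ++ y)) ↔ _
    rw [List.lex_cons_iff]
    exact ih

lemma lt_of_ne_nil {y : List α} (h : y ≠ []) : [] < y := by
  cases y with
  | nil => exact absurd rfl h
  | cons a l => exact List.Lex.nil

lemma le_of_prefix {p y : List α} (h : p <+: y) : p ≤ y := by
  obtain ⟨t, rfl⟩ := h
  rcases eq_or_ne t [] with rfl | ht
  · simp
  · refine le_of_lt ?_
    rw [show p = p ++ [] by simp] at *
    rw [List.append_assoc, List.nil_append]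
    exact (lex_append_left_iff p [] t).mpr (lt_of_ne_nil ht)

/-- `x` is less than `y` by virtue of a strictly smaller letter at some position. -/
def KeyLt (x y : List α) : Prop :=
  ∃ (p : List α) (a b : α) (s t : List α), a < b ∧ x = p ++ a :: s ∧ y = p ++ b :: t

lemma KeyLt.lt {x y : List α} (h : KeyLt x y) : x < y := by
  obtain ⟨p, a, b, s, t, hab, rfl, rfl⟩ := h
  rw [lex_append_left_iff]
  exact List.Lex.rel hab

lemma KeyLt.append {x y : List α} (h : KeyLt x y) (u v : List α) : KeyLt (x ++ u) (y ++ v) := by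
  obtain ⟨p, a, b, s, t, hab, rfl, rfl⟩ := h
  exact ⟨p, a, b, s ++ u, t ++ v, hab, by simp, by simp⟩

lemma lt_iff_keyLt_or_ext {x y : List α} :
    x < y ↔ KeyLt x y ∨ ∃ t, t ≠ [] ∧ y = x ++ t := by
  constructor
  · intro h
    induction h with
    | @nil b bs => exact Or.inr ⟨b :: bs, by simp, by simp⟩
    | @rel a l₁ b l₂ hab => exact Or.inl ⟨[], a, b, l₁, l₂, hab, rfl, rfl⟩
    | @cons a l₁ l₂ h ih =>
      rcases ih with ⟨p, c, d, s, t, hcd, rfl, rfl⟩ | ⟨t, ht, rfl⟩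
      · exact Or.inl ⟨a :: p, c, d, s, t, hcd, rfl, rfl⟩
      · exact Or.inr ⟨t, ht, rfl⟩
  · rintro (h | ⟨t, ht, rfl⟩)
    · exact h.lt
    · exact lt_of_le_of_ne (le_of_prefix ⟨t, rfl⟩) (by simp [ht])

lemma keyLt_of_lt_of_length_le {x y : List α} (h : x < y) (hl : y.length ≤ x.length) :
    KeyLt x y := by
  rcases lt_iff_keyLt_or_ext.mp h with hk | ⟨t, ht, rfl⟩
  · exact hk
  · exfalso
    have := @List.length_append _ x t
    have : t.length = 0 := by omega
    simp [List.length_eq_zero_iff.mp this] at ht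

/-- same length strict implies append-stable strictness -/
lemma lt_append_of_lt_of_length {x y : List α} (h : x < y) (hl : y.length ≤ x.length)
    (s t : List α) : x ++ s < y ++ t :=
  ((keyLt_of_lt_of_length_le h hl).append s t).lt

lemma le_of_append_le_append {p x y : List α} (h : p ++ x ≤ p ++ y) : x ≤ y := by
  by_contra hc
  exact absurd ((lex_append_left_iff p y x).mpr (not_le.mp hc)) (not_lt.mpr h)

lemma le_append_of_le {z x : List α} (h : z ≤ x) (r : List α) : z ≤ x ++ r := by
  rcases eq_or_lt_of_le h with rfl | h
  · exact le_of_prefix ⟨r, rfl⟩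
  · rcases lt_iff_keyLt_or_ext.mp h with hk | ⟨t, ht, rfl⟩
    · exact le_of_lt (by simpa using (hk.append [] r).lt)
    · exact le_of_prefix ⟨t ++ r, by simp⟩

/-! ### Lyndon words and suffixes -/

lemma IsLyndon.rotation {u v : List α} (h : IsLyndon (u ++ v)) (hu : u ≠ []) (hv : v ≠ []) :
    u ++ v < v ++ u := by
  have hlen : u.length < (u ++ v).length := by
    simp [List.length_append]
    exact List.length_pos_iff.mpr hv
  have := h.2 u.length (List.length_pos_iff.mpr hu) hlen
  rwa [List.rotate_eq_drop_append_take (le_of_lt hlen), List.drop_left, List.take_left] at this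

/-- A Lyndon word is smaller than each of its proper nonempty suffixes. -/
lemma IsLyndon.lt_suffix {u v : List α} (h : IsLyndon (u ++ v)) (hu : u ≠ []) (hv : v ≠ []) :
    u ++ v < v := by
  have hrot := h.rotation hu hv
  by_contra hc
  have hle : v ≤ u ++ v := not_lt.mp hc
  rcases eq_or_lt_of_le hle with heq | hlt
  · have hlen2 : v.length = u.length + v.length := by
      conv_lhs => rw [heq]
      simp
    have : u.length = 0 := by omega
    exact hu (List.length_eq_zero_iff.mp this)
  · rcases lt_iff_keyLt_or_ext.mp hlt with hk | ⟨z, hz, hext⟩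
    · exact absurd ((hk.append u []).lt) (not_lt.mpr (le_of_lt (by simpa using hrot)))
    · -- u ++ v = v ++ z with z ≠ []
      have hzu : z.length = u.length := by
        have := congrArg List.length hext
        simp [List.length_append] at this
        omega
      -- rotate by v.length : (u++v) < z ++ v
      have hvlen : v.length < (u ++ v).length := by
        simp [List.length_append]; exact List.length_pos_iff.mpr hu
      have h2 := h.2 v.length (List.length_pos_iff.mpr hv) hvlen
      rw [List.rotate_eq_drop_append_take (le_of_lt hvlen), hext, List.drop_left,
        List.take_left] at h2
      -- h2 : v ++ z < z ++ v
      have hzltu : z < u := by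
        rw [hext] at hrot
        exact (lex_append_left_iff v z u).mp hrot
      have hlast : z ++ v < u ++ v := lt_append_of_lt_of_length hzltu (le_of_eq hzu.symm) v v
      rw [hext] at hlast
      exact lt_irrefl _ (h2.trans hlast)

/-- Converse: smaller than all proper nonempty suffixes implies Lyndon. -/
lemma isLyndon_of_lt_suffix {w : List α} (hw : w ≠ [])
    (h : ∀ s, s <:+ w → s ≠ [] → s ≠ w → w < s) : IsLyndon w := by
  refine ⟨hw, fun k hk hklen => ?_⟩
  rw [List.rotate_eq_drop_append_take (le_of_lt hklen)]
  obtain ⟨u, v, huv, hul⟩ : ∃ u v : List α, w = u ++ v ∧ u.length = k :=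
    ⟨w.take k, w.drop k, (List.take_append_drop k w).symm, by rw [List.length_take]; omega⟩
  subst huv
  have hdt : (u ++ v).drop k = v := by
    rw [← hul, List.drop_left]
  have htk : (u ++ v).take k = u := by
    rw [← hul, List.take_left]
  rw [hdt, htk]
  have hlen : (u ++ v).length = u.length + v.length := @List.length_append _ u v
  have hvne : v ≠ [] := List.length_pos_iff.mp (by omega)
  have hune : u ≠ [] := List.length_pos_iff.mp (by omega)
  have hvs : u ++ v < v := by
    refine h v ⟨u, rfl⟩ hvne ?_
    intro hveq
    have : v.length = u.length + v.length := by
      conv_lhs => rw [hveq]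
      simp
    omega
  have hkey : KeyLt (u ++ v) v := keyLt_of_lt_of_length_le hvs (by simp)
  simpa using (hkey.append [] u).lt

/-! ### Minimal suffix -/

def minSuf : List α → List α
  | [] => []
  | a :: l => if l = [] then [a] else min (a :: l) (minSuf l)

@[simp] lemma minSuf_nil : (minSuf ([] : List α)) = [] := rfl

lemma minSuf_suffix : ∀ w : List α, minSuf w <:+ w
  | [] => suffix_rfl
  | a :: l => by
    show (if l = [] then [a] else min (a :: l) (minSuf l)) <:+ a :: l
    split
    · next h => subst h; exact suffix_rfl
    · rcases min_choice (a :: l) (minSuf l) with h | h <;> rw [h] <;>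
        first
          | exact suffix_rfl
          | exact (minSuf_suffix l).trans (List.suffix_cons a l)

lemma minSuf_ne_nil {w : List α} (hw : w ≠ []) : minSuf w ≠ [] := by
  induction w with
  | nil => exact absurd rfl hw
  | cons a l ih =>
    show (if l = [] then [a] else min (a :: l) (minSuf l)) ≠ []
    split
    · simp
    · next h =>
      rcases min_choice (a :: l) (minSuf l) with h' | h' <;> rw [h']
      · simp
      · exact ih h

lemma minSuf_min : ∀ {w : List α} {s : List α}, s <:+ w → s ≠ [] → minSuf w ≤ s
  | [], s, hs, hne => absurd (List.suffix_nil.mp hs) hne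
  | a :: l, s, hs, hne => by
    show (if l = [] then [a] else min (a :: l) (minSuf l)) ≤ s
    rcases List.suffix_cons_iff.mp hs with rfl | hsl
    · split
      · next h => subst h; exact le_refl _
      · exact min_le_left _ _
    · have hls : l ≠ [] := by
        intro h; subst h
        exact hne (List.suffix_nil.mp hsl)
      rw [if_neg hls]
      exact le_trans (min_le_right _ _) (minSuf_min hsl hne)

lemma minSuf_isLyndon {w : List α} (hw : w ≠ []) : IsLyndon (minSuf w) := by
  refine isLyndon_of_lt_suffix (minSuf_ne_nil hw) (fun s hs hne hnm => ?_)
  have hsw : s <:+ w := hs.trans (minSuf_suffix w)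
  exact lt_of_le_of_ne (minSuf_min hsw hne) (Ne.symm hnm)

/-- Any nonempty suffix of the prefix complement of the minimal suffix is ≥ the minimal suffix. -/
lemma minSuf_le_suffix_of_prefix {w u s : List α} (hw : w ≠ []) (huw : u ++ minSuf w = w)
    (hs : s <:+ u) (hne : s ≠ []) : minSuf w ≤ s := by
  set m := minSuf w with hm
  by_contra hc
  have hlt : s < m := not_le.mp hc
  have hsm_suffix : s ++ m <:+ w := by
    obtain ⟨t, rfl⟩ := hs
    exact ⟨t, by rw [← List.append_assoc, huw]⟩
  have hsm_ge : m ≤ s ++ m := minSuf_min hsm_suffix (by simp [hne])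
  rcases lt_iff_keyLt_or_ext.mp hlt with hk | ⟨z, hz, hext⟩
  · have : s ++ m < m := by simpa using (hk.append m []).lt
    exact absurd hsm_ge (not_le.mpr this)
  · -- m = s ++ z, z nonempty proper suffix of m
    have hLm : IsLyndon (s ++ z) := by
      have := minSuf_isLyndon hw
      rwa [← hm, hext] at this
    have hmz : m < z := by
      rw [hext]
      exact hLm.lt_suffix hne hz
    have : s ++ z ≤ s ++ m := by rw [← hext]; exact hsm_ge
    have hzm : z ≤ m := le_of_append_le_append this
    exact absurd hzm (not_le.mpr hmz)

/-! ### The Chen–Fox–Lyndon factorization -/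

def cfl (w : List α) : List (List α) :=
  if h : w = [] then [] else
    cfl (w.take (w.length - (minSuf w).length)) ++ [minSuf w]
termination_by w.length
decreasing_by
  have h2 : 0 < (minSuf w).length := List.length_pos_iff.mpr (minSuf_ne_nil h)
  have h3 : 0 < w.length := List.length_pos_iff.mpr h
  simp only [List.length_take]
  omega

lemma cfl_eq (w : List α) : cfl w =
    if h : w = [] then [] else cfl (w.take (w.length - (minSuf w).length)) ++ [minSuf w] := by
  rw [cfl]

@[simp] lemma cfl_nil : cfl ([] : List α) = [] := by rw [cfl_eq]; simp

lemma cfl_cons_eq {w : List α} (hw : w ≠ []) :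
    cfl w = cfl (w.take (w.length - (minSuf w).length)) ++ [minSuf w] := by
  rw [cfl_eq, dif_neg hw]

lemma take_append_minSuf {w : List α} (hw : w ≠ []) :
    w.take (w.length - (minSuf w).length) ++ minSuf w = w := by
  obtain ⟨u, hu⟩ := minSuf_suffix w
  conv_rhs => rw [← hu]
  congr 1
  have hlen : w.length = u.length + (minSuf w).length := by
    conv_lhs => rw [← hu]
    simp
  have : w.length - (minSuf w).length = u.length := by omega
  rw [this, ← hu, List.take_left]

/-! ### Properties of the factorization -/

lemma cfl_spec : ∀ (n : ℕ) (w : List α), w.length = n →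
    (cfl w).flatten = w ∧ (∀ l ∈ cfl w, IsLyndon l) ∧ (cfl w).Chain' (· ≥ ·) ∧
      (w ≠ [] → (cfl w).getLast? = some (minSuf w)) := by
  intro n
  induction n using Nat.strong_induction_on with
  | _ n ih =>
  intro w hw
  rcases eq_or_ne w [] with rfl | hne
  · exact ⟨by simp, by simp, by simp [List.Chain'], fun h => absurd rfl h⟩
  · obtain ⟨u, hum⟩ : ∃ u, u ++ minSuf w = w := ⟨_, take_append_minSuf hne⟩
    have hmne : minSuf w ≠ [] := minSuf_ne_nil hne
    have hlen : u.length + (minSuf w).length = w.length := by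
      simpa using congrArg List.length hum
    have hcw : cfl w = cfl u ++ [minSuf w] := by
      rw [cfl_cons_eq hne]
      have htu : w.take (w.length - (minSuf w).length) = u := by
        have h2 : w.length - (minSuf w).length = u.length := by omega
        rw [h2]
        conv_lhs => rw [← hum]
        exact @List.take_left _ u _
      rw [htu]
    have hul : u.length < n := by
      have : 0 < (minSuf w).length := List.length_pos_iff.mpr hmne
      omega
    obtain ⟨ihf, ihly, ihch, ihlast⟩ := ih u.length hul u rfl
    refine ⟨?_, ?_, ?_, fun _ => by rw [hcw]; exact List.getLast?_concat⟩
    · rw [hcw, List.flatten_append, ihf]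
      simpa using hum
    · intro l hl
      rw [hcw] at hl
      rcases List.mem_append.mp hl with h | h
      · exact ihly l h
      · rw [List.mem_singleton] at h
        subst h
        exact minSuf_isLyndon hne
    · rw [hcw]; simp only [List.Chain']; rw [List.isChain_append]
      refine ⟨ihch, List.isChain_singleton _, fun x hx y hy => ?_⟩
      have hy' : minSuf w = y := by simpa using hy
      subst hy'
      rcases eq_or_ne u [] with rfl | hu
      · rw [cfl_nil] at hx
        simp at hx
      · rw [ihlast hu] at hx
        have hx' : minSuf u = x := by simpa using hx
        subst hx'
        exact minSuf_le_suffix_of_prefix hne hum (minSuf_suffix u) (minSuf_ne_nil hu)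

lemma flatten_cfl (w : List α) : (cfl w).flatten = w := (cfl_spec _ w rfl).1
lemma cfl_lyndon (w : List α) : ∀ l ∈ cfl w, IsLyndon l := (cfl_spec _ w rfl).2.1
lemma cfl_chain (w : List α) : (cfl w).Chain' (· ≥ ·) := (cfl_spec _ w rfl).2.2.1

/-! ### Uniqueness -/

lemma suffix_split {s a b : List α} (h : s <:+ a ++ b) :
    s <:+ b ∨ ∃ t, t <:+ a ∧ t ≠ [] ∧ s = t ++ b := by
  induction a with
  | nil => exact Or.inl (by simpa using h)
  | cons x a ih =>
    obtain ⟨c, hc⟩ := h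
    cases c with
    | nil =>
      right
      exact ⟨x :: a, suffix_rfl, by simp, by simpa using hc⟩
    | cons y c' =>
      have hc2 : c' ++ s = a ++ b := by
        have := hc
        rw [List.cons_append, List.cons_append] at this
        injection this
      rcases ih ⟨c', hc2⟩ with h1 | ⟨t, ht, htne, rfl⟩
      · exact Or.inl h1
      · exact Or.inr ⟨t, ht.trans (List.suffix_cons x a), htne, rfl⟩

lemma suffix_ge_last : ∀ (f : List (List α)), f.Chain' (· ≥ ·) →
    (∀ l ∈ f, IsLyndon l) → ∀ x : List α, f.getLast? = some x →
    ∀ s : List α, s <:+ f.flatten → s ≠ [] → x ≤ s := by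
  intro f
  induction f with
  | nil => intro _ _ x hx; simp at hx
  | cons a f ih =>
    intro hch hly x hx s hs hne
    have ha_ly : IsLyndon a := hly a (by simp)
    cases f with
    | nil =>
      have hxa : a = x := by simpa using hx
      subst hxa
      have hs' : s <:+ a := by simpa using hs
      obtain ⟨t, rfl⟩ := hs'
      rcases eq_or_ne t [] with rfl | htne
      · simp
      · exact le_of_lt (ha_ly.lt_suffix htne hne)
    | cons b f' =>
      have hx' : (b :: f').getLast? = some x := by
        rw [List.getLast?_cons_cons] at hx
        exact hx
      have hch' : (b :: f').Chain' (· ≥ ·) := (List.isChain_cons_cons.mp hch).2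
      have hab : b ≤ a := (List.isChain_cons_cons.mp hch).1
      have hly' : ∀ l ∈ b :: f', IsLyndon l := fun l hl => hly l (List.mem_cons_of_mem a hl)
      have hxa : x ≤ a := by
        have hxmem : x ∈ b :: f' := by
          obtain ⟨hh, hxe⟩ := List.mem_getLast?_eq_getLast (Option.mem_def.mpr hx')
          rw [hxe]
          exact List.getLast_mem hh
        have hpw : (a :: b :: f').Pairwise (· ≥ ·) := List.isChain_iff_pairwise.mp hch
        exact (List.pairwise_cons.mp hpw).1 x hxmem
      rcases suffix_split (by simpa using hs) with h1 | ⟨t, ht, htne, rfl⟩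
      · exact ih hch' hly' x hx' s h1 hne
      · obtain ⟨c, hc⟩ := ht
        rcases eq_or_ne c [] with rfl | hcne
        · -- t = a
          simp at hc
          subst hc
          exact le_trans hxa (le_of_prefix ⟨_, rfl⟩)
        · have hat : a < t := by
            rw [← hc]
            exact (hc ▸ ha_ly).lt_suffix hcne htne
          exact le_trans hxa (le_trans (le_of_lt hat) (le_of_prefix ⟨_, rfl⟩))

lemma cfl_unique : ∀ (n : ℕ) (w : List α) (f : List (List α)), w.length = n →
    f.Chain' (· ≥ ·) → (∀ l ∈ f, IsLyndon l) → f.flatten = w → f = cfl w := by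
  intro n
  induction n using Nat.strong_induction_on with
  | _ n ih =>
  intro w f hw hch hly hfl
  rcases eq_or_ne w [] with rfl | hne
  · rw [cfl_nil]
    cases f with
    | nil => rfl
    | cons a f =>
      exfalso
      have := List.flatten_eq_nil_iff.mp hfl a (by simp)
      exact (hly a (by simp)).1 this
  · have hfne : f ≠ [] := by
      rintro rfl
      exact hne hfl.symm
    obtain ⟨g, l, rfl⟩ := f.eq_nil_or_concat.resolve_left hfne
    rw [List.concat_eq_append] at hch hly hfl ⊢
    have hl_ly : IsLyndon l := hly l (by simp)
    have hflg : g.flatten ++ l = w := by rw [← hfl]; simp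
    have hl_suf : l <:+ w := ⟨g.flatten, hflg⟩
    have hlast : (g ++ [l]).getLast? = some l := List.getLast?_concat
    have h1 : l ≤ minSuf w := by
      refine suffix_ge_last _ hch hly l hlast (minSuf w) ?_ (minSuf_ne_nil hne)
      rw [hfl]
      exact minSuf_suffix w
    have h2 : minSuf w ≤ l := minSuf_min hl_suf hl_ly.1
    have hlm : l = minSuf w := le_antisymm h1 h2
    have hu : g.flatten = w.take (w.length - (minSuf w).length) := by
      apply List.append_cancel_right (bs := minSuf w)
      rw [take_append_minSuf hne, ← hlm, hflg]
    have hglen : g.flatten.length < n := by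
      have hlen : w.length = g.flatten.length + l.length := by rw [← hflg]; simp
      have : 0 < l.length := List.length_pos_iff.mpr hl_ly.1
      omega
    have hg : g = cfl g.flatten := by
      refine ih _ hglen g.flatten g rfl ?_ (fun l' h => hly l' (by simp [h])) rfl
      exact (List.isChain_append.mp hch).1
    rw [cfl_cons_eq hne, ← hu, ← hg, hlm]

lemma hasStrictDecomp_iff {w : List α} : HasStrictDecomp w ↔ (cfl w).Chain' (· > ·) := by
  constructor
  · rintro ⟨f, hfl, hly, hch⟩
    have : f = cfl w := cfl_unique _ w f rfl (hch.imp fun a b h => le_of_lt h) hly hfl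
    rwa [this] at hch
  · intro h
    exact ⟨cfl w, flatten_cfl w, cfl_lyndon w, h⟩

/-! ### Counting: words as multisets of Lyndon words -/

section Counting

abbrev B2 := List (Fin 2)

/-- total length of a multiset of words -/
def wt (M : Multiset B2) : ℕ := (M.map List.length).sum

lemma wt_coe (l : List B2) : wt ↑l = (l.map List.length).sum := by
  simp [wt]

lemma wt_add (A B : Multiset B2) : wt (A + B) = wt A + wt B := by
  simp [wt]

lemma wt_two_nsmul (A : Multiset B2) : wt (2 • A) = 2 * wt A := by
  rw [two_smul, wt_add]
  ring

/-- descending sort -/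
def sortD (M : Multiset B2) : List B2 := M.sort (· ≥ ·)

lemma sortD_coe (M : Multiset B2) : ↑(sortD M) = M := Multiset.sort_eq M _

lemma sortD_sorted (M : Multiset B2) : (sortD M).Pairwise (· ≥ ·) := Multiset.pairwise_sort M _

lemma sortD_chain (M : Multiset B2) : (sortD M).Chain' (· ≥ ·) :=
  List.isChain_iff_pairwise.mpr (sortD_sorted M)

lemma sortD_mem {M : Multiset B2} {l : B2} (h : l ∈ sortD M) : l ∈ M := by
  rw [← sortD_coe M]
  exact Multiset.mem_coe.mpr h

lemma sortD_of_sorted {f : List B2} (hf : f.Pairwise (· ≥ ·)) : sortD ↑f = f :=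
  List.Perm.eq_of_pairwise' (sortD_sorted _) hf (Multiset.coe_eq_coe.mp (sortD_coe ↑f))

lemma sortD_cfl (w : B2) : sortD ↑(cfl w) = cfl w :=
  sortD_of_sorted (List.isChain_iff_pairwise.mp (cfl_chain w))

lemma cfl_flatten_sortD {M : Multiset B2} (h : ∀ l ∈ M, IsLyndon l) :
    cfl (sortD M).flatten = sortD M :=
  (cfl_unique _ _ _ rfl (sortD_chain M) (fun l hl => h l (sortD_mem hl)) rfl).symm

lemma wt_cfl (w : B2) : wt ↑(cfl w) = w.length := by
  rw [wt_coe, ← List.length_flatten, flatten_cfl]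

/-- E1 : words of length k ≃ multisets of Lyndon words of weight k -/
def E1 (k : ℕ) : {w : B2 // w.length = k} ≃
    {M : Multiset B2 // (∀ l ∈ M, IsLyndon l) ∧ wt M = k} where
  toFun w := ⟨↑(cfl w.1), fun l hl => cfl_lyndon w.1 l (Multiset.mem_coe.mp hl),
    by rw [wt_cfl, w.2]⟩
  invFun M := ⟨(sortD M.1).flatten, by
    rw [List.length_flatten, ← wt_coe, sortD_coe, M.2.2]⟩
  left_inv w := Subtype.ext (by simp only [sortD_cfl, flatten_cfl])
  right_inv M := Subtype.ext (by
    simp only [cfl_flatten_sortD M.2.1, sortD_coe])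

/-- E2 : strict words of length k ≃ nodup multisets of Lyndon words of weight k -/
def E2 (k : ℕ) : {w : B2 // w.length = k ∧ HasStrictDecomp w} ≃
    {M : Multiset B2 // (∀ l ∈ M, IsLyndon l) ∧ M.Nodup ∧ wt M = k} where
  toFun w := ⟨↑(cfl w.1), fun l hl => cfl_lyndon w.1 l (Multiset.mem_coe.mp hl),
    by
      rw [Multiset.coe_nodup]
      have hch := hasStrictDecomp_iff.mp w.2.2
      exact List.Pairwise.imp (fun h => ne_of_gt h) (List.isChain_iff_pairwise.mp hch),
    by rw [wt_cfl, w.2.1]⟩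
  invFun M := ⟨(sortD M.1).flatten,
    by rw [List.length_flatten, ← wt_coe, sortD_coe, M.2.2.2],
    by
      refine ⟨sortD M.1, rfl, fun v hv => M.2.1 v (sortD_mem hv), ?_⟩
      have hnd : (sortD M.1).Nodup := by
        rw [← Multiset.coe_nodup, sortD_coe]
        exact M.2.2.1
      have hpw := (sortD_sorted M.1).and hnd
      simp only [List.Chain']; rw [List.isChain_iff_pairwise]
      exact hpw.imp fun hab => lt_of_le_of_ne hab.1 (Ne.symm hab.2)⟩
  left_inv w := Subtype.ext (by simp only [sortD_cfl, flatten_cfl])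
  right_inv M := Subtype.ext (by
    simp only [cfl_flatten_sortD M.2.1, sortD_coe])

/-! ### Parity splitting of multisets -/

noncomputable def modd (M : Multiset B2) : Multiset B2 :=
  Finsupp.toMultiset (Finsupp.mapRange (· % 2) (by norm_num) (Multiset.toFinsupp M))

noncomputable def mhalf (M : Multiset B2) : Multiset B2 :=
  Finsupp.toMultiset (Finsupp.mapRange (· / 2) (by norm_num) (Multiset.toFinsupp M))

lemma count_modd (M : Multiset B2) (a : B2) : (modd M).count a = M.count a % 2 := by
  simp [modd, Finsupp.count_toMultiset, Finsupp.mapRange_apply, Multiset.toFinsupp_apply]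

lemma count_mhalf (M : Multiset B2) (a : B2) : (mhalf M).count a = M.count a / 2 := by
  simp [mhalf, Finsupp.count_toMultiset, Finsupp.mapRange_apply, Multiset.toFinsupp_apply]

lemma modd_add_mhalf (M : Multiset B2) : modd M + 2 • mhalf M = M := by
  refine Multiset.ext.mpr fun a => ?_
  rw [Multiset.count_add, Multiset.count_nsmul, count_modd, count_mhalf]
  omega

lemma mem_of_mem_modd {M : Multiset B2} {a : B2} (h : a ∈ modd M) : a ∈ M := by
  rw [← Multiset.count_pos] at h ⊢
  rw [count_modd] at h
  omega

lemma mem_of_mem_mhalf {M : Multiset B2} {a : B2} (h : a ∈ mhalf M) : a ∈ M := by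
  rw [← Multiset.count_pos] at h ⊢
  rw [count_mhalf] at h
  omega

lemma modd_nodup (M : Multiset B2) : (modd M).Nodup := by
  rw [Multiset.nodup_iff_count_le_one]
  intro a
  rw [count_modd]
  omega

/-- The "X" type: pairs (N, P), N a set of Lyndon words, P a multiset of Lyndon words,
with wt N + 2 wt P = n. -/
def XT (n : ℕ) := {NP : Multiset B2 × Multiset B2 //
  (∀ l ∈ NP.1, IsLyndon l) ∧ NP.1.Nodup ∧ (∀ l ∈ NP.2, IsLyndon l) ∧ wt NP.1 + 2 * wt NP.2 = n}

noncomputable def E3 (n : ℕ) : {M : Multiset B2 // (∀ l ∈ M, IsLyndon l) ∧ wt M = n} ≃ XT n where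
  toFun M := ⟨(modd M.1, mhalf M.1),
    fun l hl => M.2.1 l (mem_of_mem_modd hl),
    modd_nodup M.1,
    fun l hl => M.2.1 l (mem_of_mem_mhalf hl),
    by
      have := congrArg wt (modd_add_mhalf M.1)
      rw [wt_add, wt_two_nsmul] at this
      rw [this, M.2.2]⟩
  invFun NP := ⟨NP.1.1 + 2 • NP.1.2,
    fun l hl => by
      rcases Multiset.mem_add.mp hl with h | h
      · exact NP.2.1 l h
      · exact NP.2.2.2.1 l (Multiset.mem_nsmul.mp h).2,
    by rw [wt_add, wt_two_nsmul, NP.2.2.2.2]⟩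
  left_inv M := Subtype.ext (modd_add_mhalf M.1)
  right_inv NP := Subtype.ext (by
    have hle : ∀ a, NP.1.1.count a ≤ 1 := Multiset.nodup_iff_count_le_one.mp NP.2.2.1
    refine Prod.ext ?_ ?_ <;> refine Multiset.ext.mpr fun a => ?_
    · rw [count_modd, Multiset.count_add, Multiset.count_nsmul]
      have := hle a
      omega
    · rw [count_mhalf, Multiset.count_add, Multiset.count_nsmul]
      have := hle a
      omega)

def E4 (n m : ℕ) (hm : 2 * m ≤ n) : {x : XT n // wt x.1.2 = m} ≃
    ({M : Multiset B2 // (∀ l ∈ M, IsLyndon l) ∧ M.Nodup ∧ wt M = n - 2 * m} ×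
     {M : Multiset B2 // (∀ l ∈ M, IsLyndon l) ∧ wt M = m}) where
  toFun x := (⟨x.1.1.1, x.1.2.1, x.1.2.2.1, by
      have h1 := x.1.2.2.2.2
      have h2 := x.2
      omega⟩,
    ⟨x.1.1.2, x.1.2.2.2.1, x.2⟩)
  invFun AB := ⟨⟨(AB.1.1, AB.2.1), AB.1.2.1, AB.1.2.2.1, AB.2.2.1, by
      have h1 := AB.1.2.2.2
      have h2 := AB.2.2.2
      dsimp only
      omega⟩, AB.2.2.2⟩
  left_inv x := Subtype.ext (Subtype.ext rfl)
  right_inv AB := Prod.ext (Subtype.ext rfl) (Subtype.ext rfl)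

end Counting

/-! ### Cardinalities -/

section Cards

def eWords (k : ℕ) : {w : B2 // w.length = k} ≃ List.Vector (Fin 2) k :=
  ⟨fun w => ⟨w.1, w.2⟩, fun v => ⟨v.1, v.2⟩, fun _ => rfl, fun _ => rfl⟩

instance finWords (k : ℕ) : Finite {w : B2 // w.length = k} :=
  Finite.of_equiv _ (eWords k).symm

lemma card_words (k : ℕ) : Nat.card {w : B2 // w.length = k} = 2 ^ k := by
  rw [Nat.card_congr (eWords k), Nat.card_eq_fintype_card, card_vector]
  norm_num

instance finLM (k : ℕ) : Finite {M : Multiset B2 // (∀ l ∈ M, IsLyndon l) ∧ wt M = k} :=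
  Finite.of_equiv _ (E1 k)

lemma card_LM (k : ℕ) :
    Nat.card {M : Multiset B2 // (∀ l ∈ M, IsLyndon l) ∧ wt M = k} = 2 ^ k := by
  rw [← Nat.card_congr (E1 k), card_words]

instance finStr (k : ℕ) : Finite {w : B2 // w.length = k ∧ HasStrictDecomp w} := by
  have hinj : Function.Injective (fun w : {w : B2 // w.length = k ∧ HasStrictDecomp w} =>
      (⟨w.1, w.2.1⟩ : {w : B2 // w.length = k})) := by
    intro a b h
    apply Subtype.ext
    have := congrArg Subtype.val h
    simpa using this
  exact Finite.of_injective _ hinj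

lemma card_LS (k : ℕ) :
    Nat.card {M : Multiset B2 // (∀ l ∈ M, IsLyndon l) ∧ M.Nodup ∧ wt M = k} = Str 2 k := by
  rw [← Nat.card_congr (E2 k)]
  rfl

instance finLS (k : ℕ) :
    Finite {M : Multiset B2 // (∀ l ∈ M, IsLyndon l) ∧ M.Nodup ∧ wt M = k} :=
  Finite.of_equiv _ (E2 k)

instance finXT (n : ℕ) : Finite (XT n) :=
  Finite.of_equiv _ ((E1 n).trans (E3 n))

lemma nat_card_sigma {k : ℕ} (f : Fin k → Type*) [∀ i, Finite (f i)] :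
    Nat.card (Σ i, f i) = ∑ i, Nat.card (f i) := by
  letI : ∀ i, Fintype (f i) := fun i => Fintype.ofFinite _
  simp [Nat.card_eq_fintype_card, Fintype.card_sigma]

lemma key_identity (n : ℕ) :
    2 ^ n = ∑ m ∈ Finset.range (n / 2 + 1), Str 2 (n - 2 * m) * 2 ^ m := by
  have hX : Nat.card (XT n) = 2 ^ n := by
    rw [← Nat.card_congr ((E1 n).trans (E3 n)), card_words]
  -- partition XT n by wt of the second component
  set g : XT n → Fin (n / 2 + 1) := fun x => ⟨wt x.1.2, by
    have := x.2.2.2.2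
    omega⟩ with hg
  have hsig : Nat.card (XT n) = ∑ b : Fin (n / 2 + 1), Nat.card {x : XT n // g x = b} := by
    rw [Nat.card_congr (Equiv.sigmaFiberEquiv g).symm, nat_card_sigma]
  have hfib : ∀ b : Fin (n / 2 + 1),
      Nat.card {x : XT n // g x = b} = Str 2 (n - 2 * b.1) * 2 ^ b.1 := by
    intro b
    have e0 : {x : XT n // g x = b} ≃ {x : XT n // wt x.1.2 = b.1} :=
      Equiv.subtypeEquivRight (fun x => by
        rw [hg, Fin.ext_iff])
    have hb : 2 * b.1 ≤ n := by
      have := b.2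
      omega
    rw [Nat.card_congr (e0.trans (E4 n b.1 hb)), Nat.card_prod, card_LS, card_LM]
  rw [← hX, hsig, Finset.sum_congr rfl (fun b _ => hfib b), Fin.sum_univ_eq_sum_range
    (fun m => Str 2 (n - 2 * m) * 2 ^ m)]

end Cards

end Aux

/-- Exactly half of the binary words of length `n ≥ 2` have strictly decreasing
Chen–Fox–Lyndon factorization. -/
theorem str_two (n : ℕ) (hn : 2 ≤ n) : Str 2 n = 2 ^ (n - 1) := by
  have h1 := key_identity n
  have h2 := key_identity (n - 2)
  have hsplit : n / 2 + 1 = ((n - 2) / 2 + 1) + 1 := by omega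
  rw [hsplit, Finset.sum_range_succ'] at h1
  have hterm : ∀ m, Str 2 (n - 2 * (m + 1)) * 2 ^ (m + 1) =
      2 * (Str 2 ((n - 2) - 2 * m) * 2 ^ m) := by
    intro m
    have he : n - 2 * (m + 1) = (n - 2) - 2 * m := by omega
    rw [he, pow_succ]
    ring
  rw [Finset.sum_congr rfl (fun m _ => hterm m), ← Finset.mul_sum, ← h2] at h1
  have e1 : n = (n - 1) + 1 := by omega
  have e2 : n - 1 = (n - 2) + 1 := by omega
  have p1 : (2:ℕ) ^ n = 2 * 2 ^ (n - 1) := by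
    conv_lhs => rw [e1]
    rw [pow_succ]
    ring
  have p2 : (2:ℕ) ^ (n - 1) = 2 * 2 ^ (n - 2) := by
    conv_lhs => rw [e2]
    rw [pow_succ]
    ring
  simp only [mul_zero, Nat.sub_zero, mul_one, pow_zero] at h1
  omega
end
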